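/- arXiv:1002.1192 — 5 statements merged into one kernel-verified Lean document; each statement's English description precedes it below -/
import Mathlib

section
/- Let Γ and Σ be connected simple graphs on finite vertex sets V and W respectively, with |V| = |W| and with the same number of edges, and let ψ : V → W be a bijection. Then there exists a finite sequence of edge slides transforming Γ into a graph Γ̃ on the vertex set V such that ψ is a graph isomorphism from Γ̃ to Σ, i.e., for all x, y ∈ V, x is adjacent to y in Γ̃ if and only if ψ(x) is adjacent to ψ(y) in Σ. -/
/-!
Edge slides are reversible and preserve connectivity and the number of edges, so it suffices to
slide two connected graphs `G`, `H` on `V` with equally many edges into a common graph. Fix a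
vertex `v`. As long as `v` is not universal, some edge `yz` with `y ~ v`, `z ≁ v` can be slid to
`zv`, so both graphs can be slid until `v` is universal. Then the edges at `v` act as spare
parts: the edge `xy` turns about `x` to `xa` by sliding `xv` to `xa` and then `xy` to `xv`, and
two such turns move any edge avoiding `v` to any non-edge avoiding `v`. Moving the edges of
`G \ H` one at a time onto `H \ G` turns `G` into `H`.
-/

/-- An edge slide: given distinct vertices `x, y, z` with `x ~ y`, `y ~ z` and `x ≁ z`,
slide the edge `xy` to `xz`. -/
def EdgeSlide {V : Type*} (G G' : SimpleGraph V) : Prop :=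
  ∃ x y z : V, x ≠ z ∧ G.Adj x y ∧ G.Adj y z ∧ ¬ G.Adj x z ∧
    G' = G.deleteEdges {s(x, y)} ⊔ SimpleGraph.fromEdgeSet {s(x, z)}

open Relation

namespace Relation

theorem exists_reflTransGen_of_descent {α : Type*} {r : α → α → Prop} {I P : α → Prop}
    (f : α → ℕ) (step : ∀ a, I a → ¬ P a → ∃ b, ReflTransGen r a b ∧ I b ∧ f b < f a) :
    ∀ a, I a → ∃ b, ReflTransGen r a b ∧ P b := by
  intro a ha
  induction hn : f a using Nat.strong_induction_on generalizing a with
  | _ n ih =>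
    by_cases hPa : P a
    · exact ⟨a, .refl, hPa⟩
    obtain ⟨b, hab, hb, hlt⟩ := step a ha hPa
    obtain ⟨c, hbc, hc⟩ := ih _ (hn ▸ hlt) b hb rfl
    exact ⟨c, hab.trans hbc, hc⟩

end Relation

namespace SimpleGraph

variable {V : Type*} {G : SimpleGraph V}

theorem Connected.of_adj_reachable {H : SimpleGraph V} (hG : G.Connected)
    (h : ∀ u w, G.Adj u w → H.Reachable u w) : H.Connected := by
  have := hG.nonempty
  refine ⟨fun u w => (reachable_iff_reflTransGen u w).mpr ?_⟩
  exact ((reachable_iff_reflTransGen u w).mp (hG.preconnected u w)).lift' id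
    fun a b hab => (reachable_iff_reflTransGen a b).mp (h a b hab)

def replaceEdge (G : SimpleGraph V) (x y a b : V) : SimpleGraph V :=
  G.deleteEdges {s(x, y)} ⊔ edge a b

@[grind =]
theorem replaceEdge_adj {x y a b u w : V} :
    (G.replaceEdge x y a b).Adj u w ↔
      G.Adj u w ∧ ¬(u = x ∧ w = y ∨ u = y ∧ w = x) ∨ (u = a ∧ w = b ∨ u = b ∧ w = a) ∧ u ≠ w := by
  simp [replaceEdge, edge_adj]

theorem edgeSet_replaceEdge {x y a b : V} (hab : a ≠ b) :
    (G.replaceEdge x y a b).edgeSet = insert s(a, b) (G.edgeSet \ {s(x, y)}) := by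
  ext e
  induction e using Sym2.ind
  simp only [mem_edgeSet, replaceEdge_adj, Set.mem_insert_iff, Set.mem_sdiff,
    Set.mem_singleton_iff, Sym2.eq_iff]
  grind

theorem ncard_edgeSet_replaceEdge [Finite V] {x y a b : V} (hxy : G.Adj x y) (hab : ¬ G.Adj a b)
    (hne : a ≠ b) : (G.replaceEdge x y a b).edgeSet.ncard = G.edgeSet.ncard := by
  rw [edgeSet_replaceEdge hne, Set.ncard_insert_of_notMem (by simp [hab]),
    Set.ncard_sdiff_singleton_add_one (G.mem_edgeSet.mpr hxy)]

theorem replaceEdge_comm_left (x y a b : V) : G.replaceEdge x y a b = G.replaceEdge y x a b := by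
  ext; grind [adj_symm]

theorem replaceEdge_comm_right (x y a b : V) : G.replaceEdge x y a b = G.replaceEdge x y b a := by
  ext; grind [adj_symm]

end SimpleGraph

open SimpleGraph

section

variable {V : Type*} {G G' : SimpleGraph V}

namespace EdgeSlide

theorem of_adj {x y z : V} (hxz : x ≠ z) (hxy : G.Adj x y) (hyz : G.Adj y z) (hnxz : ¬ G.Adj x z) :
    EdgeSlide G (G.replaceEdge x y x z) :=
  ⟨x, y, z, hxz, hxy, hyz, hnxz, rfl⟩

theorem symm (h : EdgeSlide G G') : EdgeSlide G' G := by
  obtain ⟨x, y, z, hxz, hxy, hyz, hnxz, rfl⟩ := h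
  have hG : (G.replaceEdge x y x z).replaceEdge x z x y = G := by ext; grind [adj_symm]
  have hslide := of_adj (G := G.replaceEdge x y x z) (y := z) hxy.ne (by grind)
    (by grind [adj_symm]) (by grind)
  rwa [hG] at hslide

instance : Std.Symm (EdgeSlide (V := V)) := ⟨fun _ _ => symm⟩

theorem connected (h : EdgeSlide G G') (hG : G.Connected) : G'.Connected := by
  obtain ⟨x, y, z, hxz, hxy, hyz, hnxz, rfl⟩ := h
  refine hG.of_adj_reachable fun u w huw => ?_
  change (G.replaceEdge x y x z).Reachable u w
  by_cases hu : u = x ∧ w = y ∨ u = y ∧ w = x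
  · have hxz' : (G.replaceEdge x y x z).Adj x z := by grind
    have hzy : (G.replaceEdge x y x z).Adj z y := by grind [adj_symm]
    have hxy' := hxz'.reachable.trans hzy.reachable
    rcases hu with ⟨rfl, rfl⟩ | ⟨rfl, rfl⟩
    exacts [hxy', hxy'.symm]
  · exact Adj.reachable (by grind)

theorem ncard_edgeSet_eq [Finite V] (h : EdgeSlide G G') : G'.edgeSet.ncard = G.edgeSet.ncard := by
  obtain ⟨x, y, z, hxz, hxy, -, hnxz, rfl⟩ := h
  exact ncard_edgeSet_replaceEdge hxy hnxz hxz

theorem ncard_edgeSet_eq_of_reflTransGen [Finite V] (h : ReflTransGen EdgeSlide G G') :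
    G'.edgeSet.ncard = G.edgeSet.ncard := by
  induction h with
  | refl => rfl
  | tail _ hstep ih => rw [hstep.ncard_edgeSet_eq, ih]

end EdgeSlide

namespace SimpleGraph

def IsUniversalVertex (G : SimpleGraph V) (v : V) : Prop := ∀ w, w ≠ v → G.Adj v w

theorem Connected.exists_edgeSlide_neighborSet_ssubset (hG : G.Connected) {v : V}
    (hv : ¬ G.IsUniversalVertex v) : ∃ G', EdgeSlide G G' ∧ G.neighborSet v ⊂ G'.neighborSet v := by
  obtain ⟨w, hwv, hvw⟩ : ∃ w, w ≠ v ∧ ¬ G.Adj v w := by simpa [IsUniversalVertex] using hv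
  -- an edge `yz` leaving the closed neighbourhood of `v` slides to `zv`
  obtain ⟨d, -, hy, hz⟩ := (hG.preconnected v w).some.exists_boundary_dart
    {u | u = v ∨ G.Adj v u} (Or.inl rfl) (by grind)
  obtain ⟨⟨y, z⟩, hyz⟩ := d
  simp only [Set.mem_ofPred_eq, not_or] at hy hz
  have hvy : G.Adj v y := hy.resolve_left fun h => hz.2 (h ▸ hyz)
  refine ⟨G.replaceEdge z y z v, EdgeSlide.of_adj hz.1 hyz.symm hvy.symm (by grind [adj_symm]),
    Set.ssubset_iff_exists.mpr ⟨fun u hu => ?_, z, ?_, hz.2⟩⟩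
  · simp only [mem_neighborSet, replaceEdge_adj] at hu ⊢
    grind
  · simp only [mem_neighborSet, replaceEdge_adj]
    grind

theorem Connected.exists_reflTransGen_isUniversalVertex [Finite V] (hG : G.Connected) (v : V) :
    ∃ G', ReflTransGen EdgeSlide G G' ∧ G'.IsUniversalVertex v := by
  refine exists_reflTransGen_of_descent (I := Connected) (fun G₁ => (G₁.neighborSet v)ᶜ.ncard)
    (fun G₁ hG₁ hv => ?_) G hG
  obtain ⟨G₂, h, hlt⟩ := hG₁.exists_edgeSlide_neighborSet_ssubset hv
  exact ⟨G₂, .single h, h.connected hG₁, Set.ncard_lt_ncard (compl_lt_compl_iff_lt.mpr hlt)⟩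

namespace IsUniversalVertex

variable {v x y a b : V}

theorem ne_of_not_adj (hv : G.IsUniversalVertex v) (hxy : ¬ G.Adj x y) (hne : x ≠ y) :
    x ≠ v ∧ y ≠ v := by
  constructor
  · rintro rfl
    exact hxy (hv y hne.symm)
  · rintro rfl
    exact hxy (hv x hne).symm

theorem replaceEdge (hv : G.IsUniversalVertex v) (hx : x ≠ v) (hy : y ≠ v) :
    (G.replaceEdge x y a b).IsUniversalVertex v := fun w hw => by
  have := hv w hw
  grind

theorem reflTransGen_pivot (hv : G.IsUniversalVertex v) (hx : x ≠ v) (hy : y ≠ v) (ha : a ≠ v)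
    (hxy : G.Adj x y) (hxa : ¬ G.Adj x a) (hne : x ≠ a) :
    ReflTransGen EdgeSlide G (G.replaceEdge x y x a) := by
  have h₁ : EdgeSlide G (G.replaceEdge x v x a) := .of_adj hne (hv x hx).symm (hv a ha) hxa
  have h₂ : EdgeSlide (G.replaceEdge x v x a) ((G.replaceEdge x v x a).replaceEdge x y x v) :=
    .of_adj hx (by grind) (by have := hv y hy; have := hxy.ne; grind [adj_symm]) (by grind)
  have heq : (G.replaceEdge x v x a).replaceEdge x y x v = G.replaceEdge x y x a := by
    ext
    have := hv x hx
    grind [adj_symm]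
  exact .head h₁ (heq ▸ .single h₂)

theorem reflTransGen_replaceEdge (hv : G.IsUniversalVertex v) (hx : x ≠ v) (hy : y ≠ v)
    (ha : a ≠ v) (hb : b ≠ v) (hxy : G.Adj x y) (hab : ¬ G.Adj a b) (hne : a ≠ b) :
    ReflTransGen EdgeSlide G (G.replaceEdge x y a b) := by
  rcases eq_or_ne x a with rfl | hxa
  · exact hv.reflTransGen_pivot hx hy hb hxy hab hne
  rcases eq_or_ne x b with rfl | hxb
  · rw [replaceEdge_comm_right]
    exact hv.reflTransGen_pivot hx hy ha hxy (fun h => hab h.symm) hxa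
  rcases eq_or_ne y a with rfl | hya
  · rw [replaceEdge_comm_left]
    exact hv.reflTransGen_pivot hy hx hb hxy.symm hab hne
  -- otherwise route through `xa`; pivoting about `a` first is legal iff `xa` is already an edge
  by_cases hxa' : G.Adj x a
  · have heq : (G.replaceEdge a x a b).replaceEdge x y x a = G.replaceEdge x y a b := by
      ext
      grind [adj_symm]
    have h₁ := hv.reflTransGen_pivot ha hx hb hxa'.symm hab hne
    have h₂ : ReflTransGen EdgeSlide (G.replaceEdge a x a b)
        ((G.replaceEdge a x a b).replaceEdge x y x a) :=
      (hv.replaceEdge ha hx).reflTransGen_pivot hx hy ha (by grind) (by grind) hxa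
    exact h₁.trans (heq ▸ h₂)
  · have heq : (G.replaceEdge x y x a).replaceEdge a x a b = G.replaceEdge x y a b := by
      ext
      grind [adj_symm]
    have h₁ := hv.reflTransGen_pivot hx hy ha hxy hxa' hxa
    have h₂ : ReflTransGen EdgeSlide (G.replaceEdge x y x a)
        ((G.replaceEdge x y x a).replaceEdge a x a b) :=
      (hv.replaceEdge hx hy).reflTransGen_pivot ha hx hb (by grind [adj_symm]) (by grind) hne
    exact h₁.trans (heq ▸ h₂)

theorem exists_reflTransGen_ncard_sdiff_lt [Finite V] {H : SimpleGraph V}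
    (hG : G.IsUniversalVertex v) (hH : H.IsUniversalVertex v)
    (hcard : G.edgeSet.ncard = H.edgeSet.ncard) (hne : G ≠ H) :
    ∃ G', ReflTransGen EdgeSlide G G' ∧ G'.IsUniversalVertex v ∧
      G'.edgeSet.ncard = G.edgeSet.ncard ∧
      (G'.edgeSet \ H.edgeSet).ncard < (G.edgeSet \ H.edgeSet).ncard := by
  -- trade an edge `xy ∈ G \ H` for an edge `ab ∈ H \ G`
  obtain ⟨e, heG, heH⟩ := Set.not_subset.mp fun hs =>
    hne (edgeSet_inj.mp (Set.eq_of_subset_of_ncard_le hs hcard.ge))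
  obtain ⟨f, hfH, hfG⟩ := Set.not_subset.mp fun hs =>
    hne (edgeSet_inj.mp (Set.eq_of_subset_of_ncard_le hs hcard.le)).symm
  induction e using Sym2.ind with | _ x y => ?_
  induction f using Sym2.ind with | _ a b => ?_
  have hxy : G.Adj x y := heG
  have hab : ¬ G.Adj a b := hfG
  have hne : a ≠ b := (H.mem_edgeSet.mp hfH).ne
  obtain ⟨hx, hy⟩ := hH.ne_of_not_adj heH hxy.ne
  obtain ⟨ha, hb⟩ := hG.ne_of_not_adj hab hne
  refine ⟨G.replaceEdge x y a b, hG.reflTransGen_replaceEdge hx hy ha hb hxy hab hne,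
    hG.replaceEdge hx hy, ncard_edgeSet_replaceEdge hxy hab hne, ?_⟩
  rw [edgeSet_replaceEdge hne, Set.insert_sdiff_of_mem _ hfH, Set.sdiff_sdiff_comm]
  exact Set.ncard_sdiff_singleton_lt_of_mem ⟨heG, heH⟩

theorem reflTransGen_of_ncard_edgeSet_eq [Finite V] {H : SimpleGraph V}
    (hG : G.IsUniversalVertex v) (hH : H.IsUniversalVertex v)
    (h : G.edgeSet.ncard = H.edgeSet.ncard) : ReflTransGen EdgeSlide G H := by
  obtain ⟨_, hGH, rfl⟩ := exists_reflTransGen_of_descent (r := EdgeSlide) (P := (· = H))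
    (I := fun G₁ => G₁.IsUniversalVertex v ∧ G₁.edgeSet.ncard = H.edgeSet.ncard)
    (fun G₁ => (G₁.edgeSet \ H.edgeSet).ncard) (fun _ ⟨hG₁, hcard⟩ hne => by
      obtain ⟨G₂, h, hG₂, hcard₂, hlt⟩ := hG₁.exists_reflTransGen_ncard_sdiff_lt hH hcard hne
      exact ⟨G₂, h, ⟨hG₂, hcard₂.trans hcard⟩, hlt⟩) G ⟨hG, h⟩
  exact hGH

end IsUniversalVertex

end SimpleGraph

theorem reflTransGen_edgeSlide_of_connected [Finite V] {H : SimpleGraph V} (hG : G.Connected)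
    (hH : H.Connected) (h : G.edgeSet.ncard = H.edgeSet.ncard) : ReflTransGen EdgeSlide G H := by
  obtain ⟨v⟩ := hG.nonempty
  obtain ⟨G', hGG', hG'⟩ := hG.exists_reflTransGen_isUniversalVertex v
  obtain ⟨H', hHH', hH'⟩ := hH.exists_reflTransGen_isUniversalVertex v
  have hG'H' : ReflTransGen EdgeSlide G' H' := hG'.reflTransGen_of_ncard_edgeSet_eq hH' <| by
    rw [EdgeSlide.ncard_edgeSet_eq_of_reflTransGen hGG',
      EdgeSlide.ncard_edgeSet_eq_of_reflTransGen hHH', h]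
  exact hGG'.trans (hG'H'.trans (symm_of _ hHH'))

end

theorem prescribed_configuration_general {V W : Type*} [Fintype V]
    (G : SimpleGraph V) (S : SimpleGraph W)
    (hG : G.Connected) (hS : S.Connected)
    (ψ : V ≃ W)
    (hE : Nat.card G.edgeSet = Nat.card S.edgeSet) :
    ∃ G' : SimpleGraph V, Relation.ReflTransGen EdgeSlide G G' ∧
      ∀ x y : V, G'.Adj x y ↔ S.Adj (ψ x) (ψ y) := by
  let iso : S.comap ψ ≃g S := ⟨ψ, Iff.rfl⟩
  refine ⟨S.comap ψ, reflTransGen_edgeSlide_of_connected hG (iso.connected_iff.mpr hS) ?_,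
    fun _ _ => Iff.rfl⟩
  rw [← Nat.card_coe_set_eq, ← Nat.card_coe_set_eq, hE]
  exact (Nat.card_congr iso.mapEdgeSet).symm

theorem prescribed_configuration {V W : Type*} [Fintype V] [Fintype W]
    (G : SimpleGraph V) (S : SimpleGraph W)
    (hG : G.Connected) (hS : S.Connected)
    (ψ : V ≃ W)
    (hE : Nat.card G.edgeSet = Nat.card S.edgeSet) :
    ∃ G' : SimpleGraph V, Relation.ReflTransGen EdgeSlide G G' ∧
      ∀ x y : V, G'.Adj x y ↔ S.Adj (ψ x) (ψ y) :=
  prescribed_configuration_general G S hG hS ψ hE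
end

section
/- Let Γ be a connected simple graph on a finite vertex set that is not complete. Let uv be an edge of Γ and let x, y be non-adjacent vertices of Γ such that the graph obtained from Γ by removing the edge uv and adding the edge xy is connected. Then, possibly after interchanging the labels u and v, there exist a path from x to u in Γ and a path from y to v in Γ, neither of which uses the edge uv (the paths may be trivial if x = u or y = v). -/
private lemma reach_u_or_v {V : Type*} {G : SimpleGraph V} {u v : V}
    {w z : V} (p : G.Walk w z)
    (hz : (G.deleteEdges {s(u, v)}).Reachable z u ∨ (G.deleteEdges {s(u, v)}).Reachable z v) :
    (G.deleteEdges {s(u, v)}).Reachable w u ∨ (G.deleteEdges {s(u, v)}).Reachable w v := by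
  induction p with
  | nil => exact hz
  | @cons a b c h q ih =>
    by_cases he : s(a, b) = s(u, v)
    · rw [Sym2.eq_iff] at he
      rcases he with ⟨rfl, rfl⟩ | ⟨rfl, rfl⟩
      · exact Or.inl (SimpleGraph.Reachable.refl _)
      · exact Or.inr (SimpleGraph.Reachable.refl _)
    · have hadj : (G.deleteEdges {s(u, v)}).Adj a b := by
        rw [SimpleGraph.deleteEdges_adj]
        exact ⟨h, by simpa using he⟩
      rcases ih hz with h1 | h1
      · exact Or.inl (hadj.reachable.trans h1)
      · exact Or.inr (hadj.reachable.trans h1)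

private lemma sup_reach {V : Type*} {H : SimpleGraph V} {x y : V}
    (hxy : H.Reachable x y) {a b : V}
    (p : (H ⊔ SimpleGraph.fromEdgeSet {s(x, y)}).Walk a b) : H.Reachable a b := by
  induction p with
  | nil => exact SimpleGraph.Reachable.refl _
  | @cons a c b h q ih =>
    rcases h with h | h
    · exact h.reachable.trans ih
    · rw [SimpleGraph.fromEdgeSet_adj] at h
      have := h.1
      simp only [Set.mem_singleton_iff, Sym2.eq_iff] at this
      rcases this with ⟨rfl, rfl⟩ | ⟨rfl, rfl⟩
      · exact hxy.trans ih
      · exact hxy.symm.trans ih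

theorem exists_paths_avoiding_edge {V : Type*} [Fintype V] (G : SimpleGraph V)
    (hc : G.Connected) (hne : G ≠ ⊤)
    (u v x y : V) (huv : G.Adj u v) (hxy : x ≠ y) (hnadj : ¬ G.Adj x y)
    (hconn : (G.deleteEdges {s(u, v)} ⊔ SimpleGraph.fromEdgeSet {s(x, y)}).Connected) :
    ((G.deleteEdges {s(u, v)}).Reachable x u ∧ (G.deleteEdges {s(u, v)}).Reachable y v) ∨
    ((G.deleteEdges {s(u, v)}).Reachable x v ∧ (G.deleteEdges {s(u, v)}).Reachable y u) := by
  set H := G.deleteEdges {s(u, v)} with hH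
  obtain ⟨px⟩ := hc.preconnected x u
  obtain ⟨py⟩ := hc.preconnected y u
  have hx := reach_u_or_v (v := v) px (Or.inl (SimpleGraph.Reachable.refl _))
  have hy := reach_u_or_v (v := v) py (Or.inl (SimpleGraph.Reachable.refl _))
  by_cases huvr : H.Reachable u v
  · rcases hx with hx | hx <;> rcases hy with hy | hy
    · exact Or.inl ⟨hx, hy.trans huvr⟩
    · exact Or.inl ⟨hx, hy⟩
    · exact Or.inr ⟨hx, hy⟩
    · exact Or.inr ⟨hx, hy.trans huvr.symm⟩
  · rcases hx with hx | hx <;> rcases hy with hy | hy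
    · exfalso
      obtain ⟨p⟩ := hconn.preconnected u v
      exact huvr (sup_reach (hx.trans hy.symm) p)
    · exact Or.inl ⟨hx, hy⟩
    · exact Or.inr ⟨hx, hy⟩
    · exfalso
      obtain ⟨p⟩ := hconn.preconnected u v
      exact huvr (sup_reach (hx.trans hy.symm) p)
end

section
/- Let T be a tree on n vertices (a connected simple graph with n − 1 edges) and let x be any fixed vertex of T. Then there exists a finite sequence of edge slides transforming T into a graph in which x has degree n − 1 (so the resulting graph is a star centered at x). -/
namespace SimpleGraph

variable {V : Type*} {G : SimpleGraph V}

theorem Preconnected.exists_adj_adj_not_adj (hG : G.Preconnected) {x w : V} (hw : w ≠ x)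
    (hxw : ¬ G.Adj x w) : ∃ y z, G.Adj x y ∧ G.Adj y z ∧ z ≠ x ∧ ¬ G.Adj x z := by
  obtain ⟨p⟩ := hG x w
  obtain ⟨d, -, hd, hd'⟩ :=
    p.exists_boundary_dart {v | v = x ∨ G.Adj x v} (Or.inl rfl) (by simp [hw, hxw])
  simp only [Set.mem_ofPred_eq, not_or] at hd hd'
  rcases hd with hd | hd
  · exact absurd (hd ▸ d.adj) hd'.2
  · exact ⟨d.fst, d.snd, hd, d.adj, hd'.1, hd'.2⟩

theorem Preconnected.of_adj_reachable {G' : SimpleGraph V} (hG : G.Preconnected)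
    (h : ∀ u v, G.Adj u v → G'.Reachable u v) : G'.Preconnected := fun u v =>
  (reachable_iff_reflTransGen u v).mpr <|
    Relation.ReflTransGen.lift' id (fun a b hab => (reachable_iff_reflTransGen a b).mp (h a b hab))
      u v ((reachable_iff_reflTransGen u v).mp (hG u v))

theorem neighborSet_deleteEdges_sup_fromEdgeSet (G : SimpleGraph V) {a b c : V} (hca : c ≠ a)
    (hcb : c ≠ b) :
    (G.deleteEdges {s(a, b)} ⊔ fromEdgeSet {s(a, c)}).neighborSet c =
      insert a (G.neighborSet c) := by
  ext u
  simp only [mem_neighborSet, sup_adj, deleteEdges_adj, fromEdgeSet_adj, Set.mem_singleton_iff,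
    Set.mem_insert_iff, Sym2.eq_iff]
  grind

end SimpleGraph

open SimpleGraph

theorem EdgeSlide.preconnected {V : Type*} {G G' : SimpleGraph V} (h : EdgeSlide G G')
    (hG : G.Preconnected) : G'.Preconnected := by
  obtain ⟨x, y, z, hxz, hxy, hyz, -, rfl⟩ := h
  refine hG.of_adj_reachable fun u v huv => ?_
  by_cases he : s(u, v) = s(x, y)
  · have hxz' : (G.deleteEdges {s(x, y)} ⊔ fromEdgeSet {s(x, z)}).Adj x z := by
      simp [hxz]
    have hzy' : (G.deleteEdges {s(x, y)} ⊔ fromEdgeSet {s(x, z)}).Adj z y := by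
      simp [hyz.symm, hxz.symm, hxy.ne']
    have hxy' := hxz'.reachable.trans hzy'.reachable
    rcases Sym2.eq_iff.mp he with ⟨rfl, rfl⟩ | ⟨rfl, rfl⟩
    · exact hxy'
    · exact hxy'.symm
  · exact Adj.reachable (by simp [huv, he])

theorem exists_reflTransGen_edgeSlide_neighborSet_eq_compl {V : Type*} [Finite V]
    {G : SimpleGraph V} (hG : G.Preconnected) (x : V) :
    ∃ G', Relation.ReflTransGen EdgeSlide G G' ∧ G'.neighborSet x = {x}ᶜ := by
  by_cases hstar : G.neighborSet x = {x}ᶜ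
  · exact ⟨G, .refl, hstar⟩
  obtain ⟨w, hw, hxw⟩ : ∃ w, w ≠ x ∧ ¬ G.Adj x w := by
    contrapose! hstar
    ext w
    exact ⟨fun h => h.ne', hstar w⟩
  obtain ⟨y, z, hxy, hyz, hzx, hxz⟩ := hG.exists_adj_adj_not_adj hw hxw
  have hslide : EdgeSlide G (G.deleteEdges {s(z, y)} ⊔ fromEdgeSet {s(z, x)}) :=
    ⟨z, y, x, hzx, hyz.symm, hxy.symm, fun h => hxz h.symm, rfl⟩
  obtain ⟨G', hG', hstar'⟩ := exists_reflTransGen_edgeSlide_neighborSet_eq_compl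
    (hslide.preconnected hG) x
  exact ⟨G', .head hslide hG', hstar'⟩
termination_by ({x}ᶜ \ G.neighborSet x).ncard
decreasing_by
  rw [neighborSet_deleteEdges_sup_fromEdgeSet G hzx.symm hxy.ne, Set.insert_eq, ← Set.sdiff_sdiff,
    Set.sdiff_sdiff_comm]
  exact Set.ncard_sdiff_singleton_lt_of_mem ⟨hzx, hxz⟩

theorem tree_to_star_general {V : Type*} [Fintype V] (T : SimpleGraph V)
    (hc : T.Connected) (x : V) :
    ∃ T' : SimpleGraph V, Relation.ReflTransGen EdgeSlide T T' ∧
      (T'.neighborSet x).ncard = Fintype.card V - 1 := by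
  obtain ⟨T', hT', hstar⟩ := exists_reflTransGen_edgeSlide_neighborSet_eq_compl hc.preconnected x
  refine ⟨T', hT', ?_⟩
  rw [hstar, Set.ncard_compl, Set.ncard_singleton, Nat.card_eq_fintype_card]

/-- A tree (connected graph on `n` vertices with `n - 1` edges) can be slid so that a
chosen vertex `x` has degree `n - 1`. -/
theorem tree_to_star {V : Type*} [Fintype V] (T : SimpleGraph V)
    (hc : T.Connected) (he : Nat.card T.edgeSet = Fintype.card V - 1) (x : V) :
    ∃ T' : SimpleGraph V, Relation.ReflTransGen EdgeSlide T T' ∧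
      (T'.neighborSet x).ncard = Fintype.card V - 1 :=
  tree_to_star_general T hc x
end

section
/- Let Γ be a connected simple graph on n vertices and let x be any chosen vertex. Then there exists a finite sequence of edge slides transforming Γ into a graph in which x has degree n − 1, i.e., x is adjacent to every other vertex. -/
open SimpleGraph

private lemma slide_step {V : Type*} (G : SimpleGraph V)
    (hc : G.Connected) (x w : V) (hw : w ≠ x) (hxw : ¬ G.Adj x w) :
    ∃ G' : SimpleGraph V, EdgeSlide G G' ∧ G'.Connected ∧
      ∃ b, b ≠ x ∧ ¬ G.Adj x b ∧ ∀ v, G'.Adj x v ↔ (G.Adj x v ∨ v = b) := by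
  classical
  set S : Set V := insert x (G.neighborSet x) with hS
  have hxS : x ∈ S := Set.mem_insert _ _
  have hwS : w ∉ S := by
    intro h
    rcases h with h | h
    · exact hw h
    · exact hxw h
  obtain ⟨p⟩ := hc.preconnected x w
  obtain ⟨d, -, haS, hbS⟩ := p.exists_boundary_dart S hxS hwS
  set a := d.fst
  set b := d.snd
  have hab : G.Adj a b := d.adj
  have hbx : b ≠ x := fun h => hbS (h ▸ hxS)
  have hxb : ¬ G.Adj x b := fun h => hbS (Set.mem_insert_of_mem _ h)
  have hxa : G.Adj x a := by
    rcases haS with h | h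
    · exact absurd (h ▸ hab) hxb
    · exact h
  have hadj : ∀ u v, (G.deleteEdges {s(b, a)} ⊔ SimpleGraph.fromEdgeSet {s(b, x)}).Adj u v ↔
      ((G.Adj u v ∧ ¬ s(u, v) = s(b, a)) ∨ s(u, v) = s(b, x)) := by
    intro u v
    simp only [sup_adj, deleteEdges_adj, Set.mem_singleton_iff, fromEdgeSet_adj]
    constructor
    · rintro (h | h)
      · exact Or.inl h
      · exact Or.inr h.1
    · rintro (h | h)
      · exact Or.inl h
      · refine Or.inr ⟨h, ?_⟩
        rw [Sym2.eq_iff] at h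
        rcases h with ⟨h1, h2⟩ | ⟨h1, h2⟩
        · subst h1; subst h2; exact hbx
        · subst h1; subst h2; exact hbx.symm
  have hG'bx : (G.deleteEdges {s(b, a)} ⊔ SimpleGraph.fromEdgeSet {s(b, x)}).Adj b x :=
    (hadj b x).2 (Or.inr rfl)
  have hG'xa : (G.deleteEdges {s(b, a)} ⊔ SimpleGraph.fromEdgeSet {s(b, x)}).Adj x a := by
    refine (hadj x a).2 (Or.inl ⟨hxa, ?_⟩)
    rw [Sym2.eq_iff]
    rintro (⟨h1, h2⟩ | ⟨h1, h2⟩)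
    · exact hbx h1.symm
    · exact hxb (h2 ▸ hxa)
  refine ⟨G.deleteEdges {s(b, a)} ⊔ SimpleGraph.fromEdgeSet {s(b, x)}, ?_, ?_, ?_⟩
  · exact ⟨b, a, x, hbx, hab.symm, hxa.symm, fun h => hxb h.symm, rfl⟩
  · -- connectivity
    have hedge : ∀ u v, G.Adj u v →
        (G.deleteEdges {s(b, a)} ⊔ SimpleGraph.fromEdgeSet {s(b, x)}).Reachable u v := by
      intro u v huv
      by_cases h : s(u, v) = s(b, a)
      · rw [Sym2.eq_iff] at h
        rcases h with ⟨h1, h2⟩ | ⟨h1, h2⟩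
        · subst h1; subst h2
          exact hG'bx.reachable.trans hG'xa.reachable
        · subst h1; subst h2
          exact (hG'bx.reachable.trans hG'xa.reachable).symm
      · exact ((hadj u v).2 (Or.inl ⟨huv, h⟩)).reachable
    have : Nonempty V := hc.nonempty
    refine ⟨fun u v => ?_⟩
    have h := hc.preconnected u v
    rw [reachable_iff_reflTransGen] at h
    induction h with
    | refl => rfl
    | tail _ h2 ih => exact ih.trans (hedge _ _ h2)
  · -- neighbor description
    refine ⟨b, hbx, hxb, fun v => ?_⟩
    rw [hadj x v]
    constructor
    · rintro (⟨h, -⟩ | h)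
      · exact Or.inl h
      · rw [Sym2.eq_iff] at h
        rcases h with ⟨h1, h2⟩ | ⟨h1, h2⟩
        · exact absurd h1.symm hbx
        · exact Or.inr h2
    · rintro (h | h)
      · refine Or.inl ⟨h, ?_⟩
        rw [Sym2.eq_iff]
        rintro (⟨h1, h2⟩ | ⟨h1, h2⟩)
        · exact hbx h1.symm
        · exact hxb (h2 ▸ h)
      · subst h
        exact Or.inr (by rw [Sym2.eq_iff]; exact Or.inr ⟨rfl, rfl⟩)

private lemma slide_aux {V : Type*} [Fintype V] (k : ℕ) :
    ∀ G : SimpleGraph V, G.Connected → ∀ x : V,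
      {v | v ≠ x ∧ ¬ G.Adj x v}.ncard ≤ k →
      ∃ G' : SimpleGraph V, Relation.ReflTransGen EdgeSlide G G' ∧
        (G'.neighborSet x).ncard = Fintype.card V - 1 := by
  classical
  induction k with
  | zero =>
    intro G hc x hT
    have hTe : {v | v ≠ x ∧ ¬ G.Adj x v} = ∅ := by
      rw [← Set.ncard_eq_zero (Set.toFinite _)]
      omega
    refine ⟨G, Relation.ReflTransGen.refl, ?_⟩
    have hns : G.neighborSet x = {x}ᶜ := by
      ext v
      simp only [mem_neighborSet, Set.mem_compl_iff, Set.mem_singleton_iff]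
      constructor
      · intro h hv; exact G.irrefl (hv ▸ h)
      · intro hv
        by_contra h
        have : v ∈ ({v | v ≠ x ∧ ¬ G.Adj x v} : Set V) := ⟨hv, h⟩
        rw [hTe] at this
        exact this
    rw [hns]
    have h1 := Set.ncard_add_ncard_compl ({x} : Set V)
    have h2 : ({x} : Set V).ncard = 1 := Set.ncard_singleton x
    have h3 : Nat.card V = Fintype.card V := Nat.card_eq_fintype_card
    have h4 : 1 ≤ Fintype.card V := Fintype.card_pos_iff.2 ⟨x⟩
    omega
  | succ k ih =>
    intro G hc x hT
    by_cases hE : {v | v ≠ x ∧ ¬ G.Adj x v} = ∅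
    · exact ih G hc x (by rw [hE]; simp)
    · obtain ⟨w, hw, hxw⟩ := Set.nonempty_iff_ne_empty.2 hE
      obtain ⟨G', hslide, hc', b, hbx, hxb, hiff⟩ := slide_step G hc x w hw hxw
      have hT' : {v | v ≠ x ∧ ¬ G'.Adj x v} = {v | v ≠ x ∧ ¬ G.Adj x v} \ {b} := by
        ext v
        simp only [Set.mem_setOf_eq, Set.mem_diff, Set.mem_singleton_iff, hiff v]
        tauto
      have hbT : b ∈ {v | v ≠ x ∧ ¬ G.Adj x v} := ⟨hbx, hxb⟩
      have hcard : {v | v ≠ x ∧ ¬ G'.Adj x v}.ncard ≤ k := by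
        have := Set.ncard_diff_singleton_add_one hbT (Set.toFinite _)
        rw [hT']
        omega
      obtain ⟨G'', hsteps, hdeg⟩ := ih G' hc' x hcard
      exact ⟨G'', Relation.ReflTransGen.head hslide hsteps, hdeg⟩

/-- A connected simple graph can be slid so that a chosen vertex `x` has degree `n - 1`,
i.e. is adjacent to every other vertex. -/
theorem increasing_degree {V : Type*} [Fintype V] (G : SimpleGraph V)
    (hc : G.Connected) (x : V) :
    ∃ G' : SimpleGraph V, Relation.ReflTransGen EdgeSlide G G' ∧
      (G'.neighborSet x).ncard = Fintype.card V - 1 := by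
  exact slide_aux {v | v ≠ x ∧ ¬ G.Adj x v}.ncard G hc x le_rfl
end

section
/- For all integers n ≥ 1 and e with n − 1 ≤ e ≤ n(n − 1)/2, there exists a connected simple graph on n vertices with e edges whose degree sequence consists of exactly r vertices of degree k + 1 and n − r vertices of degree k, where 2e = nk + r with 0 ≤ r ≤ n − 1 (Euclidean division). In particular, every such almost regular degree sequence is realized by a connected simple graph. -/
/-!
Write `2e = nk + r` and `m = ⌊k / 2⌋`. On `Fin n`, viewed as `ℤ/n`, take the circulant graph
joining vertices at cyclic distance at most `m`, which is `2m`-regular, and add the `t` chords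
`{i, i + h}` for `i < t`. A chord raises the degree of `v` by `[v < t] + [v - h < t]`, and `h` is
chosen so that the two index intervals `[0, t)` and `[h, h + t)` are disjoint (`k = 2m`, `t = r/2`)
or together cover `ℤ/n` (`k = 2m + 1`, `t = (n + r)/2`). Then every degree is `k` or `k + 1`, and
the degree sum forces exactly `r` vertices of degree `k + 1`. The graph is connected because it
contains the path `0, 1, …, n - 1`: through the circulant part when `m ≥ 1`, and for `k = 1`
through the chords of length `h = 1`.
-/

open Finset SimpleGraph

namespace SimpleGraph

variable {V : Type*}

theorem sum_ncard_neighborSet_eq_twice_card_edgeSet [Fintype V] (G : SimpleGraph V) :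
    ∑ v, (G.neighborSet v).ncard = 2 * Nat.card G.edgeSet := by
  classical
  simp_rw [Set.ncard_eq_toFinset_card', Nat.card_eq_fintype_card, ← edgeFinset_card]
  exact G.sum_degrees_eq_twice_card_edges

theorem sum_ncard_neighborSet_of_almostRegular [Fintype V] (G : SimpleGraph V) {k : ℕ}
    (hdeg : ∀ v, (G.neighborSet v).ncard = k ∨ (G.neighborSet v).ncard = k + 1) :
    ∑ v, (G.neighborSet v).ncard
      = Fintype.card V * k + #{v | (G.neighborSet v).ncard = k + 1} := by
  have hsplit : ∀ v, (G.neighborSet v).ncard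
      = k + if (G.neighborSet v).ncard = k + 1 then 1 else 0 := fun v => by
    rcases hdeg v with h | h <;> simp [h]
  rw [Finset.sum_congr rfl fun v _ => hsplit v, sum_add_distrib, sum_const, sum_boole,
    card_univ, smul_eq_mul, Nat.cast_id]

theorem ncard_neighborSet_sup_of_disjoint [Finite V] {G H : SimpleGraph V} (hGH : Disjoint G H)
    (v : V) :
    ((G ⊔ H).neighborSet v).ncard = (G.neighborSet v).ncard + (H.neighborSet v).ncard := by
  rw [neighborSet_sup, Set.ncard_union_eq]
  exact Set.disjoint_left.mpr fun w hG hH => disjoint_left.mp hGH v w hG hH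

theorem connected_of_adj_of_val_add_one_eq {n : ℕ} [NeZero n] {G : SimpleGraph (Fin n)}
    (hG : ∀ u w : Fin n, u.val + 1 = w.val → G.Adj u w) : G.Connected := by
  obtain ⟨n, rfl⟩ := Nat.exists_eq_add_one_of_ne_zero (NeZero.ne n)
  refine (pathGraph_connected n).mono fun u w huw => ?_
  rcases pathGraph_adj.mp huw with huw | huw
  exacts [hG u w huw, (hG w u huw).symm]

variable {n m t : ℕ}

def chordGraph (h : Fin n) (t : ℕ) : SimpleGraph (Fin n) :=
  fromRel fun u w => u.val < t ∧ w = u + h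

def chordCount (h : Fin n) (t : ℕ) (v : Fin n) : ℕ :=
  (if v.val < t then 1 else 0) + (if (v - h).val < t then 1 else 0)

theorem chordCount_le_one {h : Fin n} (hth : t ≤ h.val) (hht : h.val + t ≤ n) (v : Fin n) :
    chordCount h t v ≤ 1 := by
  have hdisj : ¬(v.val < t ∧ (v - h).val < t) := fun ⟨hv, hvh⟩ => by
    rw [Fin.coe_sub_iff_lt.mpr (Fin.lt_def.mpr (by omega))] at hvh
    omega
  unfold chordCount
  split_ifs <;> omega

theorem one_le_chordCount {h : Fin n} (hth : h.val ≤ t) (hht : n ≤ h.val + t) (v : Fin n) :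
    1 ≤ chordCount h t v := by
  have hcover : v.val < t ∨ (v - h).val < t := by
    by_contra! hv
    rw [Fin.coe_sub_iff_le.mpr (Fin.le_def.mpr (by omega))] at hv
    omega
  unfold chordCount
  split_ifs <;> omega

variable [NeZero n]

def cyclePower (n m : ℕ) [NeZero n] : SimpleGraph (Fin n) :=
  circulantGraph (Fin.val ⁻¹' Set.Icc 1 m)

theorem cyclePower_adj (hmn : m < n) {u w : Fin n} :
    (cyclePower n m).Adj u w ↔ (w - u).val ∈ Icc 1 m ∪ Ico (n - m) n := by
  have hne : ¬u = w ↔ ¬(w - u).val = 0 := by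
    rw [Fin.val_eq_zero_iff, sub_eq_zero, eq_comm]
  rw [cyclePower, circulantGraph_adj, hne, ← neg_sub w u, Set.mem_preimage, Fin.val_neg]
  have := (w - u).isLt
  simp only [Set.mem_preimage, Set.mem_Icc, mem_union, mem_Icc, mem_Ico, ← Fin.val_eq_zero_iff]
  split_ifs <;> omega

theorem ncard_neighborSet_cyclePower (hmn : 2 * m < n) (v : Fin n) :
    ((cyclePower n m).neighborSet v).ncard = 2 * m := by
  have hnbr : (cyclePower n m).neighborSet v
      = (· - v) ⁻¹' (Fin.val ⁻¹' ↑(Icc 1 m ∪ Ico (n - m) n)) := by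
    ext w
    simp only [mem_neighborSet, cyclePower_adj (by omega : m < n), Set.mem_preimage, mem_coe]
  rw [hnbr, Set.ncard_preimage_of_injective_subset_range sub_left_injective
      fun x _ => ⟨x + v, add_sub_cancel_right x v⟩,
    Set.ncard_preimage_of_injective_subset_range Fin.val_injective
      (by intro i; simp [Fin.range_val]; omega),
    Set.ncard_coe_finset, card_union_of_disjoint, Nat.card_Icc, Nat.card_Ico]
  · omega
  · exact Finset.disjoint_left.mpr fun i hi hi' => by simp only [mem_Icc, mem_Ico] at hi hi'; omega

variable {h : Fin n}

theorem mem_neighborSet_chordGraph (hh : 0 < t → h ≠ 0) {v w : Fin n} :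
    w ∈ (chordGraph h t).neighborSet v ↔
      (v.val < t ∧ w = v + h) ∨ ((v - h).val < t ∧ w = v - h) := by
  rw [mem_neighborSet, chordGraph, fromRel_adj, eq_sub_iff_add_eq, eq_comm (a := v)]
  constructor
  · rintro ⟨-, ⟨hv, rfl⟩ | ⟨hw, rfl⟩⟩
    · exact Or.inl ⟨hv, rfl⟩
    · exact Or.inr ⟨by rwa [add_sub_cancel_right], rfl⟩
  · rintro (⟨hv, rfl⟩ | ⟨hw, hwv⟩)
    · exact ⟨fun hvv => hh (by omega) (by simpa using hvv), Or.inl ⟨hv, rfl⟩⟩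
    · rw [← hwv, add_sub_cancel_right] at hw
      refine ⟨fun hvw => hh (by omega) ?_, Or.inr ⟨hw, hwv⟩⟩
      simpa [hvw] using hwv

/-- When `2h = n` the two chords at `v` lead to the same vertex `v + h = v - h`; the hypothesis
`t ≤ h` then keeps them from both being present. -/
theorem ncard_neighborSet_chordGraph (hh : 0 < t → h ≠ 0)
    (hanti : 2 * h.val = n → t ≤ h.val) (v : Fin n) :
    ((chordGraph h t).neighborSet v).ncard = chordCount h t v := by
  have hne : v.val < t → (v - h).val < t → v + h ≠ v - h := fun hv hvh hvv => by
    have h0 := hh (by omega)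
    have hneg : h = -h := by simpa [sub_eq_add_neg] using hvv
    have h2 : 2 * h.val = n := by
      have := congrArg Fin.val hneg
      rw [Fin.val_neg, if_neg h0] at this
      omega
    have := hanti h2
    rw [Fin.coe_sub_iff_lt.mpr (Fin.lt_def.mpr (by omega))] at hvh
    omega
  have hnbr : (chordGraph h t).neighborSet v
      = {w | v.val < t ∧ w = v + h} ∪ {w | (v - h).val < t ∧ w = v - h} :=
    Set.ext fun w => mem_neighborSet_chordGraph hh
  rw [hnbr, chordCount]
  by_cases hv : v.val < t <;> by_cases hvh : (v - h).val < t <;> simp [hv, hvh]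
  exact Set.ncard_pair (hne hv hvh).symm

theorem sum_chordCount (ht : t ≤ n) : ∑ v, chordCount h t v = 2 * t := by
  have hval : ∑ v : Fin n, (if v.val < t then 1 else 0) = t := by
    rw [sum_boole, Nat.cast_id, Fin.card_filter_val_lt, min_eq_right ht]
  simp only [chordCount, sum_add_distrib, hval]
  rw [Fintype.sum_equiv (Equiv.subRight h) (fun v => if (v - h).val < t then 1 else 0)
    (fun v => if v.val < t then 1 else 0) fun _ => rfl, hval, two_mul]

theorem disjoint_cyclePower_chordGraph (hmn : m < n)
    (hjump : 0 < t → m < h.val ∧ h.val + m < n) :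
    Disjoint (cyclePower n m) (chordGraph h t) := by
  refine disjoint_left.mpr fun u w hc hch => ?_
  have ht : 0 < t := by
    rcases (fromRel_adj _ u w).mp hch with ⟨-, ⟨hu, -⟩ | ⟨hw, -⟩⟩ <;> omega
  obtain ⟨hmh, hhm⟩ := hjump ht
  have h0 : h ≠ 0 := fun h0 => by simp [h0] at hmh
  rw [cyclePower_adj hmn, mem_union, mem_Icc, mem_Ico] at hc
  rw [← mem_neighborSet, mem_neighborSet_chordGraph fun _ => h0] at hch
  rcases hch with ⟨-, rfl⟩ | ⟨-, rfl⟩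
  · rw [add_sub_cancel_left] at hc
    omega
  · rw [sub_sub_cancel_left, Fin.val_neg, if_neg h0] at hc
    omega

theorem connected_cyclePower_sup_chordGraph (hmn : m < n)
    (hconn : 1 ≤ m ∨ n = 1 ∨ (h.val = 1 ∧ t + 1 = n)) :
    (cyclePower n m ⊔ chordGraph h t).Connected := by
  refine connected_of_adj_of_val_add_one_eq fun u w huw => ?_
  have hwu : (w - u).val = 1 := by
    rw [Fin.coe_sub_iff_le.mpr (Fin.le_def.mpr (by omega))]
    omega
  rcases hconn with hm | hn | ⟨hh, ht⟩
  · left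
    rw [cyclePower_adj hmn, hwu]
    simp [hm]
  · omega
  · right
    rw [chordGraph, fromRel_adj]
    refine ⟨fun huw' => by simp [huw'] at hwu, Or.inl ⟨by omega, ?_⟩⟩
    rw [← sub_eq_iff_eq_add', Fin.ext_iff, hwu, hh]

theorem exists_connected_almostRegular_of_chords {k e r : ℕ} (h : Fin n) (hm : 2 * m < n)
    (ht : t ≤ n) (hjump : 0 < t → m < h.val ∧ h.val + m < n)
    (hanti : 2 * h.val = n → t ≤ h.val)
    (hconn : 1 ≤ m ∨ n = 1 ∨ (h.val = 1 ∧ t + 1 = n))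
    (hdeg : ∀ v, k ≤ 2 * m + chordCount h t v ∧ 2 * m + chordCount h t v ≤ k + 1)
    (he : 2 * e = n * (2 * m) + 2 * t) (hdiv : 2 * e = n * k + r) :
    ∃ G : SimpleGraph (Fin n), G.Connected ∧ Nat.card G.edgeSet = e ∧
      #{v | (G.neighborSet v).ncard = k + 1} = r ∧
      ∀ v, (G.neighborSet v).ncard = k ∨ (G.neighborSet v).ncard = k + 1 := by
  set G := cyclePower n m ⊔ chordGraph h t
  have hh : 0 < t → h ≠ 0 := fun ht h0 => by simpa [h0] using (hjump ht).1
  have hG : ∀ v, (G.neighborSet v).ncard = 2 * m + chordCount h t v := fun v => by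
    rw [ncard_neighborSet_sup_of_disjoint (disjoint_cyclePower_chordGraph (by omega) hjump),
      ncard_neighborSet_cyclePower hm, ncard_neighborSet_chordGraph hh hanti]
  have hGdeg : ∀ v, (G.neighborSet v).ncard = k ∨ (G.neighborSet v).ncard = k + 1 := fun v => by
    have := hdeg v
    rw [hG v]
    omega
  have hsum : ∑ v, (G.neighborSet v).ncard = n * (2 * m) + 2 * t := by
    simp only [hG, sum_add_distrib, sum_chordCount ht, sum_const, card_univ, Fintype.card_fin,
      smul_eq_mul]
  have hedges := G.sum_ncard_neighborSet_eq_twice_card_edgeSet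
  have hfilter := G.sum_ncard_neighborSet_of_almostRegular hGdeg
  rw [Fintype.card_fin] at hfilter
  exact ⟨G, connected_cyclePower_sup_chordGraph (by omega) hconn, by omega, by omega, hGdeg⟩

theorem exists_connected_almostRegular_of_disjoint_chords {e r : ℕ} (h : ℕ) (hhn : h < n)
    (hm : 2 * m < n) (hjump : 0 < t → m < h ∧ h + m < n) (hconn : 1 ≤ m ∨ n = 1)
    (hth : t ≤ h) (hht : h + t ≤ n) (hr : r = 2 * t) (hdiv : 2 * e = n * (2 * m) + r) :
    ∃ G : SimpleGraph (Fin n), G.Connected ∧ Nat.card G.edgeSet = e ∧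
      #{v | (G.neighborSet v).ncard = 2 * m + 1} = r ∧
      ∀ v, (G.neighborSet v).ncard = 2 * m ∨ (G.neighborSet v).ncard = 2 * m + 1 := by
  refine exists_connected_almostRegular_of_chords ⟨h, hhn⟩ hm (by omega) hjump (fun _ => hth)
    (by omega) (fun v => ⟨by omega, ?_⟩) (by omega) hdiv
  have := chordCount_le_one (h := ⟨h, hhn⟩) hth hht v
  omega

theorem exists_connected_almostRegular_of_covering_chords {e r : ℕ} (h : ℕ) (hhn : h < n)
    (hm : 2 * m < n) (hjump : m < h ∧ h + m < n) (hanti : 2 * h = n → t ≤ h)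
    (hconn : 1 ≤ m ∨ (h = 1 ∧ t + 1 = n)) (hth : h ≤ t) (ht : t ≤ n) (hht : n ≤ h + t)
    (hr : r + n = 2 * t) (hdiv : 2 * e = n * (2 * m + 1) + r) :
    ∃ G : SimpleGraph (Fin n), G.Connected ∧ Nat.card G.edgeSet = e ∧
      #{v | (G.neighborSet v).ncard = 2 * m + 1 + 1} = r ∧
      ∀ v, (G.neighborSet v).ncard = 2 * m + 1 ∨ (G.neighborSet v).ncard = 2 * m + 1 + 1 := by
  rw [mul_add, mul_one] at hdiv
  refine exists_connected_almostRegular_of_chords ⟨h, hhn⟩ hm ht (fun _ => hjump) hanti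
    (hconn.elim Or.inl (Or.inr ∘ Or.inr)) (fun v => ?_) (by omega)
    (by rw [hdiv, mul_add, mul_one])
  have := one_le_chordCount (h := ⟨h, hhn⟩) hth hht v
  have : chordCount ⟨h, hhn⟩ t v ≤ 2 := by
    unfold chordCount
    split_ifs <;> omega
  omega

end SimpleGraph

theorem almostRegular_degree_bounds {n e k r : ℕ} (hn : 1 ≤ n) (h2 : e ≤ n * (n - 1) / 2)
    (hdiv : 2 * e = n * k + r) : k + 1 ≤ n ∧ (0 < r → k + 2 ≤ n) := by
  have hnk : n * k + r ≤ n * (n - 1) := by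
    have := Nat.div_mul_le_self (n * (n - 1)) 2
    omega
  refine ⟨?_, fun hr => ?_⟩
  · have := Nat.le_of_mul_le_mul_left (by omega : n * k ≤ n * (n - 1)) (by omega)
    omega
  · have := Nat.lt_of_mul_lt_mul_left (a := n) (by omega : n * k < n * (n - 1))
    omega

open Finset in
/-- Every almost regular degree sequence (with `r` vertices of degree `k + 1` and `n - r`
of degree `k`, where `2e = nk + r`, `0 ≤ r < n`, and `n - 1 ≤ e ≤ n(n-1)/2`) is realized
by a connected simple graph on `n` vertices with `e` edges. -/
theorem almost_regular_realization (n e k r : ℕ) (hn : 1 ≤ n)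
    (h1 : n - 1 ≤ e) (h2 : e ≤ n * (n - 1) / 2)
    (hdiv : 2 * e = n * k + r) (hr : r < n) :
    ∃ G : SimpleGraph (Fin n), G.Connected ∧ Nat.card G.edgeSet = e ∧
      (univ.filter fun v => (G.neighborSet v).ncard = k + 1).card = r ∧
      ∀ v, (G.neighborSet v).ncard = k ∨ (G.neighborSet v).ncard = k + 1 := by
  have : NeZero n := ⟨by omega⟩
  obtain ⟨hk, hkr⟩ := almostRegular_degree_bounds hn h2 hdiv
  obtain ⟨m, rfl | rfl⟩ := Nat.even_or_odd' k
  · have heven : n * (2 * m) = 2 * (n * m) := by ring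
    have hconn : 1 ≤ m ∨ n = 1 := by
      rcases Nat.eq_zero_or_pos m with rfl | hm
      · simp only [mul_zero, zero_add] at hdiv
        omega
      · omega
    exact SimpleGraph.exists_connected_almostRegular_of_disjoint_chords (t := r / 2) (n / 2)
      (by omega) (by omega) (fun ht => by have := hkr (by omega); omega) hconn (by omega)
      (by omega) (by omega) hdiv
  have hodd : n * (2 * m + 1) = 2 * (n * m) + n := by ring
  rcases Nat.eq_zero_or_pos m with rfl | hm
  · exact SimpleGraph.exists_connected_almostRegular_of_covering_chords (t := n - 1) 1
      (by omega) (by omega) (by omega) (by omega) (by omega) (by omega) (by omega) (by omega)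
      (by omega) hdiv
  rcases Nat.eq_zero_or_pos r with rfl | hr0
  · exact SimpleGraph.exists_connected_almostRegular_of_covering_chords (t := n / 2) (n / 2)
      (by omega) (by omega) (by omega) (by omega) (by omega) (by omega) (by omega) (by omega)
      (by omega) hdiv
  · have := hkr hr0
    exact SimpleGraph.exists_connected_almostRegular_of_covering_chords (t := (n + r) / 2)
      ((n - 1) / 2) (by omega) (by omega) (by omega) (by omega) (by omega) (by omega) (by omega)
      (by omega) (by omega) hdiv
end
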